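/- arXiv:1809.04745 — 4 statements merged into one kernel-verified Lean document; each statement's English description precedes it below -/
import Mathlib

section
/- Let s be a j-pattern sequence and let d(s) denote the number of distinct values taken by s. For any positive integer K, the number of index sequences i : {0,…,j−1} → {0,…,K−1} with i(0)=0 that have the same equality pattern as s, i.e., i(a)=i(b) if and only if s(a)=s(b) for all a,b ∈ {0,…,j−1}, equals n(s) = (K−1)(K−2)⋯(K−(d(s)−1)) = ∏_{t=1}^{d(s)−1} (K−t). -/
/-- A `j`-pattern sequence: `s 0 = 1` and each subsequent value is either `ℓ + 1`
(a fresh label) or equal to an earlier value. -/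
def IsPatternSeq (j : ℕ) (s : Fin j → ℕ) : Prop :=
  (∀ h0 : 0 < j, s ⟨0, h0⟩ = 1) ∧
  ∀ ℓ : Fin j, 1 ≤ ℓ.val → (s ℓ = ℓ.val + 1 ∨ ∃ q : Fin j, q < ℓ ∧ s ℓ = s q)

/-!
An index sequence with the same equality pattern as `s` is `f ∘ s` for a unique injection `f`
from the range of `s` into `Fin K`. Requiring `i 0 = 0` fixes `f` at `s 0`, and what remains is an
injection of the other `d(s) - 1` values into the `K - 1` nonzero indices; there are
`(K - 1)(K - 2)⋯(K - (d(s) - 1))` of those.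
-/

open Function Finset

namespace Function.Embedding

variable {ι γ : Type*}

def subtypeApplyEqEquiv [DecidableEq ι] (x₀ : ι) (c₀ : γ) :
    {f : ι ↪ γ // f x₀ = c₀} ≃ ({x // x ≠ x₀} ↪ {c // c ≠ c₀}) where
  toFun f := ⟨fun x => ⟨f.1 x, fun h => x.2 (f.1.injective (h.trans f.2.symm))⟩,
    fun _ _ h => Subtype.ext (f.1.injective (congrArg Subtype.val h))⟩
  invFun g := ⟨⟨fun x => if h : x = x₀ then c₀ else g ⟨x, h⟩, by
      intro x y hxy
      by_cases hx : x = x₀ <;> by_cases hy : y = x₀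
      · rw [hx, hy]
      · simp only [hx, hy, dite_true, dite_false] at hxy
        exact absurd hxy.symm (g _).2
      · simp only [hx, hy, dite_true, dite_false] at hxy
        exact absurd hxy (g _).2
      · simp only [hx, hy, dite_false] at hxy
        simpa using g.injective (Subtype.ext hxy)⟩, by simp⟩
  left_inv f := by
    ext x
    by_cases hx : x = x₀
    · simp [hx, f.2]
    · exact dif_neg hx
  right_inv g := by
    ext x
    simp [x.2]

theorem card_subtype_apply_eq [Fintype ι] [Fintype γ] (x₀ : ι) (c₀ : γ) :
    Nat.card {f : ι ↪ γ // f x₀ = c₀} =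
      (Fintype.card γ - 1).descFactorial (Fintype.card ι - 1) := by
  classical
  rw [Nat.card_congr (subtypeApplyEqEquiv x₀ c₀), Nat.card_eq_fintype_card,
    Fintype.card_embedding_eq, Fintype.card_subtype_compl, Fintype.card_subtype_compl]
  simp

end Function.Embedding

theorem Nat.descFactorial_pred_eq_prod_Icc (n k : ℕ) :
    (n - 1).descFactorial k = ∏ t ∈ Icc 1 k, (n - t) := by
  induction k with
  | zero => simp
  | succ k ih =>
    rw [Nat.descFactorial_succ, ih, prod_Icc_succ_top (by omega), Nat.sub_sub, add_comm 1 k,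
      mul_comm]

section

variable {α β γ : Type*}

noncomputable def kerEquivEmbeddingRange (s : α → β) :
    {i : α → γ // ∀ a b, i a = i b ↔ s a = s b} ≃ (Set.range s ↪ γ) where
  toFun i := ⟨fun y => i.1 (Set.rangeSplitting s y), fun y z h => Subtype.ext <| by
    rw [← Set.apply_rangeSplitting s y, ← Set.apply_rangeSplitting s z]
    exact (i.2 _ _).1 h⟩
  invFun f := ⟨fun a => f (Set.rangeFactorization s a), fun a b => by
    rw [f.injective.eq_iff, Subtype.ext_iff]; rfl⟩
  left_inv i := Subtype.ext <| funext fun a => (i.2 _ _).2 (Set.apply_rangeSplitting s _)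
  right_inv f := by
    ext y
    exact congrArg f (Set.leftInverse_rangeSplitting s y)

theorem card_apply_eq_and_ker_eq [Fintype α] [DecidableEq β] [Fintype γ] (s : α → β) (a₀ : α)
    (c₀ : γ) :
    Nat.card {i : α → γ // i a₀ = c₀ ∧ ∀ a b, i a = i b ↔ s a = s b}
      = (Fintype.card γ - 1).descFactorial ((univ.image s).card - 1) := by
  have e : {i : α → γ // i a₀ = c₀ ∧ ∀ a b, i a = i b ↔ s a = s b}
      ≃ {f : Set.range s ↪ γ // f ⟨s a₀, a₀, rfl⟩ = c₀} :=
    (Equiv.subtypeEquivRight fun _ => and_comm).trans <|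
      (Equiv.subtypeSubtypeEquivSubtypeInter _ _).symm.trans <|
        Equiv.subtypeEquiv (kerEquivEmbeddingRange s) fun i =>
          eq_iff_eq_cancel_right.2 <|
            (i.2 _ _).2 (Set.apply_rangeSplitting s ⟨s a₀, a₀, rfl⟩).symm
  rw [Nat.card_congr e, Embedding.card_subtype_apply_eq, ← Set.toFinset_card,
    Set.toFinset_range]

end

theorem pattern_equivalence_class_size_general (j K : ℕ) (hj : 0 < j) (hK : 0 < K)
    (s : Fin j → ℕ) :
    Nat.card {i : Fin j → Fin K //
        i ⟨0, hj⟩ = ⟨0, hK⟩ ∧ ∀ a b : Fin j, i a = i b ↔ s a = s b}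
      = ∏ t ∈ Finset.Icc 1 ((Finset.univ.image s).card - 1), (K - t) := by
  rw [card_apply_eq_and_ker_eq, Fintype.card_fin, Nat.descFactorial_pred_eq_prod_Icc]

/-- Lemma 3: the number of index sequences `i : Fin j → Fin K` with `i 0 = 0` having
the same equality pattern as a `j`-pattern sequence `s` equals
`n(s) = (K-1)(K-2)⋯(K-(d(s)-1))`, where `d(s)` is the number of distinct values of `s`. -/
theorem pattern_equivalence_class_size (j K : ℕ) (hj : 0 < j) (hK : 0 < K)
    (s : Fin j → ℕ) (hs : IsPatternSeq j s) :
    Nat.card {i : Fin j → Fin K //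
        i ⟨0, hj⟩ = ⟨0, hK⟩ ∧ ∀ a b : Fin j, i a = i b ↔ s a = s b}
      = ∏ t ∈ Finset.Icc 1 ((Finset.univ.image s).card - 1), (K - t) :=
  pattern_equivalence_class_size_general j K hj hK s
end

section
/- (Lemma P: probability that the parity bits of a sub-block are non-discriminating.) Fix positive integers K and n with K ≥ n, fragment lengths m : {0,…,n−1} → ℕ, and a j-pattern sequence s (of length j ≤ n) whose values are read as message indices in {1,…,K}. For a message tuple W drawn uniformly at random, and for q ∈ {1,…,j−1}, define the event A_{q,s} = { W : for every ℓ < q with s(ℓ) ≠ s(q), W_{s(q)}(ℓ) = W_{s(ℓ)}(ℓ) }. Then Pr(A_{q,s}) = 2^(−Σ m(ℓ)), where the sum runs over ℓ ∈ {0,…,q−1} with s(ℓ) ≠ s(q). -/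
/-- A message tuple: `K` messages, each consisting of `n` fragments, the `ℓ`-th
fragment being a row vector in `F₂^{m ℓ}`. -/
abbrev MsgTuple (K n : ℕ) (m : Fin n → ℕ) : Type :=
  Fin K → (ℓ : Fin n) → Fin (m ℓ) → ZMod 2

/-
Split a message tuple into the row `W_{s(q)}` and the remaining rows. Because pattern values
are positive, `s ℓ ≠ s q` means that row `s ℓ` is a different row, so once the remaining rows
are chosen, each constraint fixes the fragment `ℓ` of row `s(q)` and leaves the other fragments
free. Counting fibres gives `#A_{q,s} · ∏ 2^{m ℓ} = #(all tuples)`, the product running over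
the `ℓ < q` with `s ℓ ≠ s q`.
-/

theorem IsPatternSeq.one_le {j : ℕ} {s : Fin j → ℕ} (hs : IsPatternSeq j s) (ℓ : Fin j) :
    1 ≤ s ℓ := by
  induction ℓ using WellFoundedLT.induction with
  | _ ℓ ih =>
    rcases Nat.eq_zero_or_pos ℓ.val with h0 | hpos
    · rw [show ℓ = ⟨0, by omega⟩ from Fin.ext h0, hs.1]
    · rcases hs.2 ℓ hpos with hfresh | ⟨p, hp, hsp⟩
      · omega
      · exact hsp ▸ ih p hp

section Counting

variable {κ ι : Type*} [Fintype ι] [DecidableEq ι] {β : ι → Type*}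

theorem Nat.card_subtype_pi_eq_on (S : Finset ι) (g : ∀ ℓ ∈ S, β ℓ) :
    Nat.card {f : ∀ ℓ, β ℓ // ∀ ℓ (h : ℓ ∈ S), f ℓ = g ℓ h} = ∏ ℓ ∈ Sᶜ, Nat.card (β ℓ) := by
  rw [Nat.card_congr (Equiv.subtypePiEquivPi (p := fun ℓ b => ∀ h : ℓ ∈ S, b = g ℓ h)),
    Nat.card_pi, ← Finset.prod_compl_mul_prod S,
    Finset.prod_eq_one (s := S) fun ℓ hℓ => ?_, mul_one]
  · exact Finset.prod_congr rfl fun ℓ hℓ => Nat.card_congr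
      (Equiv.subtypeUnivEquiv fun _ h => absurd h (Finset.mem_compl.mp hℓ))
  · exact (Nat.card_congr (Equiv.subtypeEquivRight fun b => forall_prop_of_true hℓ)).trans
      Nat.card_unique

theorem Nat.card_subtype_row_eq_row_mul_prod [Fintype κ] [DecidableEq κ] [∀ ℓ, Fintype (β ℓ)]
    (k₀ : κ) (S : Finset ι) (c : ι → κ) (hc : ∀ ℓ ∈ S, c ℓ ≠ k₀) :
    Nat.card {W : κ → ∀ ℓ, β ℓ // ∀ ℓ ∈ S, W k₀ ℓ = W (c ℓ) ℓ} * ∏ ℓ ∈ S, Nat.card (β ℓ) =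
      Nat.card (κ → ∀ ℓ, β ℓ) := by
  let R := {k // k ≠ k₀} → ∀ ℓ, β ℓ
  let e : {W : κ → ∀ ℓ, β ℓ // ∀ ℓ ∈ S, W k₀ ℓ = W (c ℓ) ℓ} ≃
      Σ Wr : R, {w : ∀ ℓ, β ℓ // ∀ ℓ (h : ℓ ∈ S), w ℓ = Wr ⟨c ℓ, hc ℓ h⟩ ℓ} :=
    (((Equiv.funSplitAt k₀ (∀ ℓ, β ℓ)).trans (Equiv.prodComm _ _)).subtypeEquiv
      fun _ => Iff.rfl).trans
      (Equiv.subtypeProdEquivSigmaSubtype fun Wr w => ∀ ℓ (h : ℓ ∈ S), w ℓ = Wr ⟨c ℓ, hc ℓ h⟩ ℓ)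
  calc _ = (Nat.card R * ∏ ℓ ∈ Sᶜ, Nat.card (β ℓ)) * ∏ ℓ ∈ S, Nat.card (β ℓ) := by
        rw [Nat.card_congr e, Nat.card_sigma]
        simp only [Nat.card_subtype_pi_eq_on, Finset.sum_const, Finset.card_univ, smul_eq_mul,
          Nat.card_eq_fintype_card]
    _ = Nat.card R * Nat.card (∀ ℓ, β ℓ) := by
        rw [mul_assoc, Finset.prod_compl_mul_prod, ← Nat.card_pi]
    _ = Nat.card (κ → ∀ ℓ, β ℓ) := by
        rw [Nat.card_congr (Equiv.funSplitAt k₀ _), Nat.card_prod, mul_comm]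

end Counting

theorem nondiscriminating_parity_probability_general (K n j : ℕ)
    (hjn : j ≤ n)
    (m : Fin n → ℕ) (s : Fin j → ℕ) (hs : IsPatternSeq j s)
    (hsK : ∀ ℓ : Fin j, s ℓ - 1 < K)
    (q : Fin j) :
    (Nat.card {W : MsgTuple K n m //
        ∀ ℓ : Fin j, ℓ < q → s ℓ ≠ s q →
          W ⟨s q - 1, hsK q⟩ (Fin.castLE hjn ℓ)
            = W ⟨s ℓ - 1, hsK ℓ⟩ (Fin.castLE hjn ℓ)} : ℚ)
        / (Nat.card (MsgTuple K n m) : ℚ)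
      = (2 : ℚ) ^ (-((∑ ℓ ∈ Finset.univ.filter (fun ℓ : Fin j => ℓ < q ∧ s ℓ ≠ s q),
              m (Fin.castLE hjn ℓ) : ℕ) : ℤ)) := by
  let F := Finset.univ.filter (fun ℓ : Fin j => ℓ < q ∧ s ℓ ≠ s q)
  -- the row compared with row `s q` at fragment `ℓ`; its values at `ℓ ≥ j` do not matter
  let c : Fin n → Fin K :=
    Function.extend (Fin.castLE hjn) (fun ℓ => ⟨s ℓ - 1, hsK ℓ⟩) fun _ => ⟨s q - 1, hsK q⟩
  have hc (ℓ : Fin j) : c (Fin.castLE hjn ℓ) = ⟨s ℓ - 1, hsK ℓ⟩ :=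
    (Fin.castLE_injective hjn).extend_apply _ _ _
  have hrows : ∀ ℓ ∈ F, (⟨s ℓ - 1, hsK ℓ⟩ : Fin K) ≠ ⟨s q - 1, hsK q⟩ := by
    intro ℓ hℓ hrow
    have := (Finset.mem_filter.mp hℓ).2.2
    have := hs.one_le ℓ
    have := hs.one_le q
    rw [Fin.mk.injEq] at hrow
    omega
  have hfrag (ℓ : Fin n) : Nat.card (Fin (m ℓ) → ZMod 2) = 2 ^ m ℓ := by
    rw [Nat.card_fun, Nat.card_zmod, Nat.card_eq_fintype_card, Fintype.card_fin]
  have hcount := Nat.card_subtype_row_eq_row_mul_prod (β := fun ℓ => Fin (m ℓ) → ZMod 2)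
    ⟨s q - 1, hsK q⟩ (F.map (Fin.castLEEmb hjn)) c
    (by simpa [Finset.forall_mem_map, hc] using hrows)
  simp only [Finset.sum_map, Finset.forall_mem_map, Fin.coe_castLEEmb, hc, hfrag,
    Finset.prod_pow_eq_pow_sum, F, Finset.mem_filter, Finset.mem_univ, true_and, and_imp] at hcount
  have htot : (Nat.card (MsgTuple K n m) : ℚ) ≠ 0 := Nat.cast_ne_zero.mpr Nat.card_pos.ne'
  rw [zpow_neg, zpow_natCast, div_eq_iff htot, ← hcount]
  push_cast
  field_simp

/-- Lemma P: for a uniformly random message tuple, the probability that the parity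
bits of sub-block `q` are non-discriminating for the `j`-pattern sequence `s`, i.e.
that `W_{s(q)}(ℓ) = W_{s(ℓ)}(ℓ)` for every `ℓ < q` with `s ℓ ≠ s q`, equals
`2 ^ (-Σ_{ℓ<q, s ℓ ≠ s q} m ℓ)`. -/
theorem nondiscriminating_parity_probability (K n j : ℕ)
    (hj : 0 < j) (hjn : j ≤ n) (hnK : n ≤ K)
    (m : Fin n → ℕ) (s : Fin j → ℕ) (hs : IsPatternSeq j s)
    (hsK : ∀ ℓ : Fin j, s ℓ - 1 < K)
    (q : Fin j) (hq : 1 ≤ q.val) :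
    (Nat.card {W : MsgTuple K n m //
        ∀ ℓ : Fin j, ℓ < q → s ℓ ≠ s q →
          W ⟨s q - 1, hsK q⟩ (Fin.castLE hjn ℓ)
            = W ⟨s ℓ - 1, hsK ℓ⟩ (Fin.castLE hjn ℓ)} : ℚ)
        / (Nat.card (MsgTuple K n m) : ℚ)
      = (2 : ℚ) ^ (-((∑ ℓ ∈ Finset.univ.filter (fun ℓ : Fin j => ℓ < q ∧ s ℓ ≠ s q),
              m (Fin.castLE hjn ℓ) : ℕ) : ℤ)) :=
  nondiscriminating_parity_probability_general K n j hjn m s hs hsK q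
end

section
/- (Survival probability of a fixed candidate path over the random generator matrices.) Fix positive integers K and n, fragment information lengths m : {0,…,n−1} → ℕ, parity lengths l : {1,…,n−1} → ℕ, a fixed (deterministic) message tuple w : {1,…,K} → ∏_{ℓ=0}^{n−1} F₂^{m(ℓ)}, and a fixed index sequence i : {0,…,n−1} → {1,…,K}. Call stage q ∈ {1,…,n−1} discriminating if the concatenated row vector ( w_{i(0)}(0)+w_{i(q)}(0), …, w_{i(q−1)}(q−1)+w_{i(q)}(q−1) ) over F₂ is nonzero. If the generator blocks G_{ℓ,q−1} ∈ F₂^{m(ℓ)×l(q)} (for 0 ≤ ℓ ≤ q−1, 1 ≤ q ≤ n−1) are drawn independently and uniformly at random, then the probability that the parity equations Σ_{ℓ=0}^{q−1} ( w_{i(ℓ)}(ℓ) + w_{i(q)}(ℓ) )·G_{ℓ,q−1} = 0 hold simultaneously for all q = 1,…,n−1 equals ∏_{q discriminating} 2^(−l(q)). -/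
/-!
The constraints of different stages involve disjoint sets of generator blocks, so the survival
probability is the product over stages `q` of the probability of the stage-`q` constraint. That
constraint says that `G ↦ Σ_{ℓ<q} v_ℓ ⬝ G_ℓ`, with `v_ℓ = w_{i(ℓ)}(ℓ) + w_{i(q)}(ℓ)`, vanishes; the
kernel of an additive map has relative size `1 / |range|`, and the range is all of `F₂^{l q}` when
some `v_ℓ ≠ 0` and is `0` otherwise. Over `F₂`, `v_ℓ = 0` exactly when the two fragments agree.
-/

/-- A tuple of generator blocks `G_{ℓ,q-1} ∈ F₂^{m ℓ × l q}`, one for each pair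
`0 ≤ ℓ < q ≤ n-1`. -/
abbrev GenTuple (n : ℕ) (m l : Fin n → ℕ) : Type :=
  (q : Fin n) → (ℓ : Fin n) → ℓ.val < q.val → Matrix (Fin (m ℓ)) (Fin (l q)) (ZMod 2)

open Matrix

theorem AddMonoidHom.card_ker_div_card {G H : Type*} [AddGroup G] [AddGroup H] [Finite G]
    (f : G →+ H) : (Nat.card f.ker : ℚ) / Nat.card G = (Nat.card f.range : ℚ)⁻¹ := by
  have hG : (Nat.card G : ℚ) ≠ 0 := by exact_mod_cast Nat.card_pos.ne'
  rw [← f.ker.card_mul_index, AddSubgroup.index_ker] at hG ⊢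
  push_cast at hG ⊢
  rw [div_mul_cancel_left₀ (left_ne_zero_of_mul hG)]

theorem card_subtype_forall_div_card {ι : Type*} [Fintype ι] {β : ι → Type*}
    (p : ∀ i, β i → Prop) :
    (Nat.card {f : ∀ i, β i // ∀ i, p i (f i)} : ℚ) / Nat.card (∀ i, β i) =
      ∏ i, (Nat.card {b // p i b} : ℚ) / Nat.card (β i) := by
  rw [Nat.card_congr Equiv.subtypePiEquivPi, Nat.card_pi, Nat.card_pi, Nat.cast_prod,
    Nat.cast_prod, Finset.prod_div_distrib]

theorem Matrix.vecMul_right_surjective {K m n : Type*} [DivisionRing K] [Fintype m]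
    {v : m → K} (hv : v ≠ 0) : Function.Surjective (v ᵥ* · : Matrix m n K → n → K) := by
  classical
  obtain ⟨t, ht⟩ := Function.ne_iff.mp hv
  intro y
  exact ⟨vecMulVec (Pi.single t (v t)⁻¹) y, by
    simp only [vecMul_vecMulVec, dotProduct_single, mul_inv_cancel₀ ht, one_smul]⟩

section ParityMap

variable {K ι : Type*} [Field K] [Fintype ι] (P : ι → Prop) [DecidablePred P] {d : ι → ℕ}
  (c : ℕ) (v : (x : ι) → Fin (d x) → K)

/-- Indexed by `Subtype P` rather than by `(x : ι) → P x → _`: Pi instances need a `Type` domain,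
so the latter carries no group structure. -/
def parityMap : ((x : Subtype P) → Matrix (Fin (d x)) (Fin c) K) →+ (Fin c → K) where
  toFun g := ∑ x : Subtype P, v x ᵥ* g x
  map_zero' := by simp
  map_add' g g' := by simp [vecMul_add, Finset.sum_add_distrib]

theorem range_parityMap_eq_top {x : ι} (hx : P x) (hvx : v x ≠ 0) :
    (parityMap P c v).range = ⊤ := by
  classical
  refine AddMonoidHom.range_eq_top.mpr fun y => ?_
  obtain ⟨M, hM⟩ := vecMul_right_surjective (n := Fin c) hvx y
  refine ⟨Pi.single ⟨x, hx⟩ M, ?_⟩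
  change ∑ x, _ = _
  rw [Fintype.sum_eq_single ⟨x, hx⟩ fun z hz => by rw [Pi.single_eq_of_ne hz, vecMul_zero],
    Pi.single_eq_same]
  exact hM

theorem range_parityMap_eq_bot (hv : ∀ x, P x → v x = 0) : (parityMap P c v).range = ⊥ :=
  AddMonoidHom.range_eq_bot_iff.mpr <| AddMonoidHom.ext fun g =>
    Finset.sum_eq_zero fun x _ => by rw [hv x x.2, zero_vecMul]

theorem card_range_parityMap [Fintype K] [Decidable (∃ x, P x ∧ v x ≠ 0)] :
    Nat.card (parityMap P c v).range = if ∃ x, P x ∧ v x ≠ 0 then Fintype.card K ^ c else 1 := by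
  split_ifs with h
  · obtain ⟨x, hx, hvx⟩ := h
    rw [range_parityMap_eq_top P c v hx hvx, AddSubgroup.card_top, Nat.card_fun]
    simp
  · push Not at h
    rw [range_parityMap_eq_bot P c v h, AddSubgroup.card_bot]

theorem card_parity_solutions_div_card [Fintype K] [Decidable (∃ x, P x ∧ v x ≠ 0)] :
    (Nat.card {g : (x : ι) → P x → Matrix (Fin (d x)) (Fin c) K //
        (∑ x, if h : P x then v x ᵥ* g x h else 0) = 0} : ℚ) /
      Nat.card ((x : ι) → P x → Matrix (Fin (d x)) (Fin c) K) =
    if ∃ x, P x ∧ v x ≠ 0 then ((Fintype.card K : ℚ) ^ c)⁻¹ else 1 := by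
  let e : ((x : ι) → P x → Matrix (Fin (d x)) (Fin c) K) ≃
      ((x : Subtype P) → Matrix (Fin (d x)) (Fin c) K) :=
    { toFun g x := g x x.2, invFun g x h := g ⟨x, h⟩, left_inv _ := rfl, right_inv _ := rfl }
  have hsum (g) : (∑ x, if h : P x then v x ᵥ* g x h else 0) = parityMap P c v (e g) := by
    rw [← Fintype.sum_subtype_add_sum_subtype P]
    exact (add_eq_left.mpr (Finset.sum_eq_zero fun x _ => dif_neg x.2)).trans
      (Finset.sum_congr rfl fun x _ => dif_pos x.2)
  rw [Nat.card_congr (e.subtypeEquiv (q := (· ∈ (parityMap P c v).ker)) fun g => by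
      rw [AddMonoidHom.mem_ker, hsum]), Nat.card_congr e,
    AddMonoidHom.card_ker_div_card, card_range_parityMap]
  split_ifs <;> simp

end ParityMap

theorem candidate_path_survival_probability_general (K n : ℕ)
    (m l : Fin n → ℕ)
    (w : Fin K → (ℓ : Fin n) → Fin (m ℓ) → ZMod 2)
    (i : Fin n → Fin K) :
    (Nat.card {G : GenTuple n m l //
        ∀ q : Fin n, 1 ≤ q.val →
          (∑ ℓ : Fin n, if h : ℓ.val < q.val
              then Matrix.vecMul (fun t => w (i ℓ) ℓ t + w (i q) ℓ t) (G q ℓ h)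
              else 0) = 0} : ℚ)
        / (Nat.card (GenTuple n m l) : ℚ)
      = ∏ q ∈ Finset.univ.filter (fun q : Fin n =>
            1 ≤ q.val ∧ ∃ ℓ : Fin n, ℓ.val < q.val ∧ w (i ℓ) ℓ ≠ w (i q) ℓ),
          (2 : ℚ) ^ (-(l q : ℤ)) := by
  classical
  rw [card_subtype_forall_div_card fun q
      (g : (ℓ : Fin n) → ℓ.val < q.val → Matrix (Fin (m ℓ)) (Fin (l q)) (ZMod 2)) =>
      1 ≤ q.val → (∑ ℓ : Fin n, if h : ℓ.val < q.val
        then (fun t => w (i ℓ) ℓ t + w (i q) ℓ t) ᵥ* g ℓ h else 0) = 0,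
    Finset.prod_filter]
  refine Finset.prod_congr rfl fun q _ => ?_
  by_cases hq : 1 ≤ q.val
  · simp only [hq, forall_const, true_and]
    rw [card_parity_solutions_div_card]
    refine if_congr (exists_congr fun ℓ => and_congr_right fun _ => not_congr <| by
      simp only [funext_iff, Pi.zero_apply, CharTwo.add_eq_zero]) (by simp [_root_.zpow_neg]) rfl
  · simp [hq, Finset.prod_ne_zero_iff, Fintype.card_ne_zero]

/-- Survival probability of a fixed candidate path over the random generator matrices:
with all generator blocks independent and uniform, the probability that the parity
equations `Σ_{ℓ<q} (w_{i(ℓ)}(ℓ) + w_{i(q)}(ℓ))·G_{ℓ,q-1} = 0` hold for every stage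
`q = 1,…,n-1` equals the product of `2^(-l q)` over the discriminating stages `q`,
i.e. those for which some fragment `ℓ < q` satisfies `w_{i(ℓ)}(ℓ) ≠ w_{i(q)}(ℓ)`. -/
theorem candidate_path_survival_probability (K n : ℕ) (hK : 0 < K) (hn : 0 < n)
    (m l : Fin n → ℕ)
    (w : Fin K → (ℓ : Fin n) → Fin (m ℓ) → ZMod 2)
    (i : Fin n → Fin K) :
    (Nat.card {G : GenTuple n m l //
        ∀ q : Fin n, 1 ≤ q.val →
          (∑ ℓ : Fin n, if h : ℓ.val < q.val
              then Matrix.vecMul (fun t => w (i ℓ) ℓ t + w (i q) ℓ t) (G q ℓ h)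
              else 0) = 0} : ℚ)
        / (Nat.card (GenTuple n m l) : ℚ)
      = ∏ q ∈ Finset.univ.filter (fun q : Fin n =>
            1 ≤ q.val ∧ ∃ ℓ : Fin n, ℓ.val < q.val ∧ w (i ℓ) ℓ ≠ w (i q) ℓ),
          (2 : ℚ) ^ (-(l q : ℤ)) :=
  candidate_path_survival_probability_general K n m l w i
end

section
/- (Bound on the expected surviving paths for trailing parity allocation, from the proof of Theorem 2.) Let K, J, n, r be positive integers with K ≥ 2, 1 ≤ r ≤ n−1, K < 2^J, and set P = r·J. Define parity lengths l(ℓ) = 0 for 1 ≤ ℓ < n − r and l(ℓ) = J for n − r ≤ ℓ ≤ n−1, and p(ℓ) = 2^(−l(ℓ)). Then Σ_{q=1}^{n−1} K^(n−1−q)·(K−1)·∏_{ℓ=q}^{n−1} p(ℓ) ≤ K^(n−1)/2^P + K/(2^J − K). -/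
open Finset

/-!
With `c = 2⁻ᴶ`, the product over `[q, n - 1]` consists of `min (n - q) r` factors `c`, and
`c ^ min a b ≤ c ^ a + c ^ b`. The `c ^ r` part leaves `(K - 1) · Σ_{j < n-1} Kʲ = K^(n-1) - 1`,
and the other part is a geometric series in `K c < 1`, bounded by `(K - 1) c / (1 - K c)`.
-/

lemma pow_min_le_pow_add_pow {R : Type*} [Semiring R] [PartialOrder R] [IsOrderedRing R]
    {c : R} (hc : 0 ≤ c) (a b : ℕ) : c ^ min a b ≤ c ^ a + c ^ b := by
  rcases min_choice a b with h | h <;> rw [h]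
  · exact le_add_of_nonneg_right (pow_nonneg hc b)
  · exact le_add_of_nonneg_left (pow_nonneg hc a)

lemma sum_Icc_one_sub_eq_sum_range {M : Type*} [AddCommMonoid M] (f : ℕ → M) (m : ℕ) :
    ∑ q ∈ Icc 1 m, f (m - q) = ∑ j ∈ range m, f j := by
  rw [← Ico_add_one_right_eq_Icc, sum_Ico_reflect f 1 le_rfl, Nat.add_sub_cancel, Nat.sub_self,
    Nat.Ico_zero_eq_range]

lemma prod_Icc_ite_lt_sub (n r q : ℕ) (hq : q < n) {M : Type*} [CommMonoid M] (c : M) :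
    ∏ ℓ ∈ Icc q (n - 1), (if ℓ < n - r then 1 else c) = c ^ min (n - 1 - q + 1) r := by
  have hfilter : {ℓ ∈ Icc q (n - 1) | ¬ ℓ < n - r} = Icc (max q (n - r)) (n - 1) := by
    ext ℓ
    simp only [mem_filter, mem_Icc, max_le_iff]
    omega
  rw [prod_ite, prod_const_one, one_mul, prod_const, hfilter, Nat.card_Icc]
  congr 1
  omega

theorem sum_geom_mul_pow_min_le {x c : ℝ} (hx : 1 ≤ x) (hc : 0 ≤ c) (hxc : x * c < 1)
    (m r : ℕ) :
    ∑ j ∈ range m, x ^ j * (x - 1) * c ^ min (j + 1) r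
      ≤ x ^ m * c ^ r + (x - 1) * c / (1 - x * c) := by
  have hx1 : 0 ≤ x - 1 := by linarith
  calc ∑ j ∈ range m, x ^ j * (x - 1) * c ^ min (j + 1) r
      ≤ ∑ j ∈ range m, x ^ j * (x - 1) * (c ^ r + c ^ (j + 1)) := by
        gcongr with j
        rw [min_comm]
        exact pow_min_le_pow_add_pow hc _ _
    _ = (∑ j ∈ range m, x ^ j) * (x - 1) * c ^ r
          + (x - 1) * c * ∑ j ∈ range m, (x * c) ^ j := by
        rw [sum_mul, sum_mul, mul_sum, ← sum_add_distrib]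
        refine sum_congr rfl fun j _ => ?_
        ring
    _ = (x ^ m - 1) * c ^ r + (x - 1) * c * ∑ j ∈ range m, (x * c) ^ j := by
        rw [geom_sum_mul]
    _ ≤ x ^ m * c ^ r + (x - 1) * c * (1 / (1 - x * c)) := by
        gcongr
        · linarith [pow_nonneg hc r]
        · simpa using geom_sum_Ico_le_of_lt_one (m := 0) (n := m) (by positivity) hxc
    _ = x ^ m * c ^ r + (x - 1) * c / (1 - x * c) := by rw [mul_one_div]

theorem trailing_parity_surviving_paths_bound_general (K J n r : ℕ)
    (hK : 2 ≤ K) (hKJ : K < 2 ^ J)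
    (l : ℕ → ℕ) (hl : ∀ ℓ, l ℓ = if ℓ < n - r then 0 else J)
    (p : ℕ → ℝ) (hp : ∀ ℓ, p ℓ = (2 : ℝ) ^ (-(l ℓ : ℤ))) :
    ∑ q ∈ Finset.Icc 1 (n - 1),
        (K : ℝ) ^ (n - 1 - q) * ((K : ℝ) - 1) * ∏ ℓ ∈ Finset.Icc q (n - 1), p ℓ
      ≤ (K : ℝ) ^ (n - 1) / 2 ^ (r * J) + (K : ℝ) / ((2 : ℝ) ^ J - K) := by
  set c : ℝ := ((2 : ℝ) ^ J)⁻¹ with hc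
  have hp_ite : ∀ ℓ, p ℓ = if ℓ < n - r then 1 else c := fun ℓ => by
    rw [hp, hl]; split_ifs <;> simp [c]
  have hK1 : (1 : ℝ) ≤ K := by exact_mod_cast (by omega : 1 ≤ K)
  have hKJ' : (K : ℝ) < 2 ^ J := by exact_mod_cast hKJ
  have hKc : (K : ℝ) * c < 1 := by rwa [← div_eq_mul_inv, div_lt_one (by positivity)]
  have hreindex : ∑ q ∈ Icc 1 (n - 1),
        (K : ℝ) ^ (n - 1 - q) * ((K : ℝ) - 1) * ∏ ℓ ∈ Icc q (n - 1), p ℓ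
      = ∑ j ∈ range (n - 1), (K : ℝ) ^ j * ((K : ℝ) - 1) * c ^ min (j + 1) r := by
    rw [← sum_Icc_one_sub_eq_sum_range]
    refine sum_congr rfl fun q hq => ?_
    simp_rw [hp_ite, prod_Icc_ite_lt_sub n r q (by rw [mem_Icc] at hq; omega)]
  calc _ = _ := hreindex
    _ ≤ (K : ℝ) ^ (n - 1) * c ^ r + ((K : ℝ) - 1) * c / (1 - K * c) :=
        sum_geom_mul_pow_min_le hK1 (by positivity) hKc _ _
    _ = (K : ℝ) ^ (n - 1) / 2 ^ (r * J) + ((K : ℝ) - 1) / ((2 : ℝ) ^ J - K) := by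
        have : (2 : ℝ) ^ J - K ≠ 0 := by linarith
        rw [hc, inv_pow, ← pow_mul, mul_comm J r, div_eq_mul_inv]
        field_simp
    _ ≤ _ := by gcongr; linarith

/-- Bound on the expected number of surviving erroneous paths for the trailing parity
allocation: with `P = r·J` parity bits all placed in the last `r` sub-blocks
(`l ℓ = 0` for `ℓ < n - r`, `l ℓ = J` otherwise) and `p ℓ = 2^(-l ℓ)`,
`Σ_{q=1}^{n-1} K^(n-1-q)·(K-1)·∏_{ℓ=q}^{n-1} p ℓ ≤ K^(n-1)/2^P + K/(2^J - K)`. -/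
theorem trailing_parity_surviving_paths_bound (K J n r : ℕ)
    (hK : 2 ≤ K) (hJ : 0 < J) (hr1 : 1 ≤ r) (hrn : r ≤ n - 1) (hKJ : K < 2 ^ J)
    (l : ℕ → ℕ) (hl : ∀ ℓ, l ℓ = if ℓ < n - r then 0 else J)
    (p : ℕ → ℝ) (hp : ∀ ℓ, p ℓ = (2 : ℝ) ^ (-(l ℓ : ℤ))) :
    ∑ q ∈ Finset.Icc 1 (n - 1),
        (K : ℝ) ^ (n - 1 - q) * ((K : ℝ) - 1) * ∏ ℓ ∈ Finset.Icc q (n - 1), p ℓ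
      ≤ (K : ℝ) ^ (n - 1) / 2 ^ (r * J) + (K : ℝ) / ((2 : ℝ) ^ J - K) :=
  trailing_parity_surviving_paths_bound_general K J n r hK hKJ l hl p hp
end
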